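/- arXiv:2204.00120 — 5 statements merged into one kernel-verified Lean document; each statement's English description precedes it below -/
import Mathlib

section
/- Consider a single sub-carrier in a multi-cell downlink NOMA system. Fix a serving cell k and two of its users, user 1 (weak) and user 2 (strong), with link gains 0 < g_{k,1} < g_{k,2} from cell k. Let the other cells be indexed by a finite set I; each cell i ∈ I transmits total power p_i ≥ 0 on this sub-carrier, with link gains g_{i,1} > 0 and g_{i,2} > 0 to user 1 and user 2 respectively. Let N > 0 be the noise power, let P₁ > 0 be the power cell k allocates to user 1's signal, and let J ≥ 0 be the total intra-cell power of cell k's signals that are decoded after user 1's signal (these are treated as interference when decoding user 1's signal). Then the SINR of user 1's signal at user 2, namely g_{k,2}·P₁ / (g_{k,2}·J + Σ_{i∈I} g_{i,2}·p_i + N), is at least the SINR of user 1's signal at user 1, namely g_{k,1}·P₁ / (g_{k,1}·J + Σ_{i∈I} g_{i,1}·p_i + N), if and only if Σ_{i∈I} (g_{k,2}·g_{i,1} − g_{k,1}·g_{i,2})·p_i + (g_{k,2} − g_{k,1})·N ≥ 0. (This is the necessary and sufficient condition for the strong user to be able to decode and remove the weak user's signal under SIC in multi-cell NOMA.) -/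
/-- Necessary and sufficient condition for feasible SIC in multi-cell NOMA:
the SINR of the weak user's signal at the strong user is at least its SINR at the
weak user iff the stated linear condition on powers, gains and noise holds. -/
theorem sic_feasibility_condition
    {I : Type*} [Fintype I]
    (gk1 gk2 : ℝ) (gi1 gi2 p : I → ℝ) (N P1 J : ℝ)
    (hgk1 : 0 < gk1) (hgk : gk1 < gk2)
    (hgi1 : ∀ i, 0 < gi1 i) (hgi2 : ∀ i, 0 < gi2 i)
    (hp : ∀ i, 0 ≤ p i) (hN : 0 < N) (hP1 : 0 < P1) (hJ : 0 ≤ J) :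
    gk1 * P1 / (gk1 * J + (∑ i, gi1 i * p i) + N)
      ≤ gk2 * P1 / (gk2 * J + (∑ i, gi2 i * p i) + N)
    ↔ (∑ i, (gk2 * gi1 i - gk1 * gi2 i) * p i) + (gk2 - gk1) * N ≥ 0 := by
  have hgk2 : 0 < gk2 := hgk1.trans hgk
  have hS1 : 0 ≤ ∑ i, gi1 i * p i :=
    Finset.sum_nonneg fun i _ => mul_nonneg (hgi1 i).le (hp i)
  have hS2 : 0 ≤ ∑ i, gi2 i * p i :=
    Finset.sum_nonneg fun i _ => mul_nonneg (hgi2 i).le (hp i)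
  have hD1 : 0 < gk1 * J + (∑ i, gi1 i * p i) + N := by positivity
  have hD2 : 0 < gk2 * J + (∑ i, gi2 i * p i) + N := by positivity
  rw [div_le_div_iff₀ hD1 hD2]
  have hsum : (∑ i, (gk2 * gi1 i - gk1 * gi2 i) * p i)
      = gk2 * (∑ i, gi1 i * p i) - gk1 * (∑ i, gi2 i * p i) := by
    rw [Finset.mul_sum, Finset.mul_sum, ← Finset.sum_sub_distrib]
    congr 1; ext i; ring
  constructor
  · intro h
    rw [hsum]
    nlinarith
  · intro h
    rw [hsum] at h
    nlinarith
end

section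
/- Let n ≥ 1 and consider an interference network with signal gains s : Fin n → ℝ satisfying s(i) > 0 for all i, nonnegative interference coefficients c : Fin n → Fin n → ℝ with c(i,j) ≥ 0 for all i, j and c(i,i) = 0, and noise power N > 0. For a power vector p : Fin n → ℝ with p(i) ≥ 0 for all i, define its SINR vector z(p) componentwise by z(p)(i) = 1 + s(i)·p(i) / (Σ_j c(i,j)·p(j) + N). If p₁ and p₂ are two nonnegative power vectors whose SINR vectors satisfy z(p₁)(i) ≤ z(p₂)(i) for every i, then p₁(i) ≤ p₂(i) for every i. -/
/-!
The SINR inequality `z(p₁) ≤ z(p₂)` says `p₁ i · T(p₂)_i ≤ p₂ i · T(p₁)_i`, where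
`T(p)_i = ∑ j, c i j * p j + N` is the interference-plus-noise seen by `i`. This `T` is a standard
interference function in the sense of Yates: positive, monotone and strictly subhomogeneous,
`T(t • p) < t • T(p)` for `t > 1`. If `p₁ ≰ p₂`, let `t > 1` be the largest ratio `p₁ i / p₂ i`,
attained at `i₀`. Then `p₁ ≤ t • p₂`, so `T(p₁)_{i₀} ≤ T(t • p₂)_{i₀} < t · T(p₂)_{i₀}`, which
contradicts the SINR inequality at `i₀`, where `p₁ i₀ = t · p₂ i₀`.
-/

open Finset

section StandardInterference

variable {ι : Type*} [Fintype ι]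

structure IsStandardInterference (T : (ι → ℝ) → ι → ℝ) : Prop where
  pos : ∀ p, 0 ≤ p → ∀ i, 0 < T p i
  mono : ∀ p q, 0 ≤ p → p ≤ q → T p ≤ T q
  smul_lt : ∀ p, 0 ≤ p → ∀ t : ℝ, 1 < t → ∀ i, T (t • p) i < t * T p i

theorem isStandardInterference_affine {c : ι → ι → ℝ} {N : ℝ} (hc : ∀ i j, 0 ≤ c i j)
    (hN : 0 < N) : IsStandardInterference fun p i => ∑ j, c i j * p j + N where
  pos p hp i := add_pos_of_nonneg_of_pos (sum_nonneg fun j _ => mul_nonneg (hc i j) (hp j)) hN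
  mono p q _ hpq i := by
    dsimp only
    gcongr with j
    exacts [hc i j, hpq j]
  smul_lt p _ t ht i := by
    have hsum : ∑ j, c i j * (t • p) j = t * ∑ j, c i j * p j := by
      simp only [Pi.smul_apply, smul_eq_mul, mul_sum]
      exact sum_congr rfl fun j _ => by ring
    rw [hsum, mul_add]
    linarith [lt_mul_of_one_lt_left hN ht]

/-- `t` is the largest ratio `p i / q i`. -/
theorem exists_one_lt_le_smul_of_not_le {p q : ι → ℝ} (hq : ∀ i, 0 ≤ q i)
    (hsupp : ∀ i, q i = 0 → p i ≤ 0) (hpq : ¬p ≤ q) :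
    ∃ t : ℝ, 1 < t ∧ ∃ i, 0 < q i ∧ p i = t * q i ∧ p ≤ t • q := by
  obtain ⟨i₁, hi₁⟩ : ∃ i, q i < p i := by simpa [Pi.le_def] using hpq
  have hqi₁ : 0 < q i₁ := (hq i₁).lt_of_ne fun h => (hsupp i₁ h.symm).not_gt (h ▸ hi₁)
  obtain ⟨i₀, -, hmax⟩ := exists_max_image univ (fun i => p i / q i) ⟨i₁, mem_univ _⟩
  have ht : 1 < p i₀ / q i₀ :=
    ((one_lt_div hqi₁).2 hi₁).trans_le (hmax i₁ (mem_univ _))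
  have hqi₀ : 0 < q i₀ := (hq i₀).lt_of_ne fun h => by
    rw [← h, div_zero] at ht
    exact zero_lt_one.not_gt ht
  refine ⟨p i₀ / q i₀, ht, i₀, hqi₀, (div_mul_cancel₀ _ hqi₀.ne').symm, fun j => ?_⟩
  rcases (hq j).eq_or_lt with hqj | hqj
  · simpa [← hqj] using hsupp j hqj.symm
  · exact (div_le_iff₀ hqj).1 (hmax j (mem_univ _))

theorem IsStandardInterference.le_of_mul_le_mul {T : (ι → ℝ) → ι → ℝ}
    (hT : IsStandardInterference T) {p₁ p₂ : ι → ℝ} (hp₁ : 0 ≤ p₁) (hp₂ : 0 ≤ p₂)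
    (h : ∀ i, p₁ i * T p₂ i ≤ p₂ i * T p₁ i) : p₁ ≤ p₂ := by
  by_contra hle
  have hsupp : ∀ i, p₂ i = 0 → p₁ i ≤ 0 := fun i hi => by
    have := h i
    rw [hi, zero_mul] at this
    exact nonpos_of_mul_nonpos_left this (hT.pos p₂ hp₂ i)
  obtain ⟨t, ht, i, hp₂i, hp₁i, hdom⟩ := exists_one_lt_le_smul_of_not_le hp₂ hsupp hle
  have hT₁ : T p₁ i < t * T p₂ i :=
    (hT.mono p₁ _ hp₁ hdom i).trans_lt (hT.smul_lt p₂ hp₂ t ht i)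
  have : p₂ i * (t * T p₂ i) < p₂ i * (t * T p₂ i) :=
    calc p₂ i * (t * T p₂ i) = p₁ i * T p₂ i := by rw [hp₁i]; ring
      _ ≤ p₂ i * T p₁ i := h i
      _ < p₂ i * (t * T p₂ i) := mul_lt_mul_of_pos_left hT₁ hp₂i
  exact this.false

end StandardInterference

theorem one_add_mul_div_le_one_add_mul_div_iff {s a b A B : ℝ} (hs : 0 < s) (hA : 0 < A)
    (hB : 0 < B) : 1 + s * a / A ≤ 1 + s * b / B ↔ a * B ≤ b * A := by
  rw [add_le_add_iff_left, mul_div_assoc, mul_div_assoc, mul_le_mul_iff_right₀ hs,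
    div_le_div_iff₀ hA hB]

theorem sinr_domination_implies_power_domination_general
    (n : ℕ)
    (s : Fin n → ℝ) (hs : ∀ i, 0 < s i)
    (c : Fin n → Fin n → ℝ) (hc : ∀ i j, 0 ≤ c i j)
    (N : ℝ) (hN : 0 < N)
    (p₁ p₂ : Fin n → ℝ) (hp₁ : ∀ i, 0 ≤ p₁ i) (hp₂ : ∀ i, 0 ≤ p₂ i)
    (hz : ∀ i, 1 + s i * p₁ i / ((∑ j, c i j * p₁ j) + N)
              ≤ 1 + s i * p₂ i / ((∑ j, c i j * p₂ j) + N)) :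
    ∀ i, p₁ i ≤ p₂ i :=
  have hT := isStandardInterference_affine hc hN
  hT.le_of_mul_le_mul hp₁ hp₂ fun i =>
    (one_add_mul_div_le_one_add_mul_div_iff (hs i) (hT.pos p₁ hp₁ i) (hT.pos p₂ hp₂ i)).1 (hz i)

/-- If the SINR vectors of two nonnegative power vectors satisfy
`z(p₁) ≤ z(p₂)` componentwise, then `p₁ ≤ p₂` componentwise. -/
theorem sinr_domination_implies_power_domination
    (n : ℕ) (hn : 1 ≤ n)
    (s : Fin n → ℝ) (hs : ∀ i, 0 < s i)
    (c : Fin n → Fin n → ℝ) (hc : ∀ i j, 0 ≤ c i j) (hcd : ∀ i, c i i = 0)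
    (N : ℝ) (hN : 0 < N)
    (p₁ p₂ : Fin n → ℝ) (hp₁ : ∀ i, 0 ≤ p₁ i) (hp₂ : ∀ i, 0 ≤ p₂ i)
    (hz : ∀ i, 1 + s i * p₁ i / ((∑ j, c i j * p₁ j) + N)
              ≤ 1 + s i * p₂ i / ((∑ j, c i j * p₂ j) + N)) :
    ∀ i, p₁ i ≤ p₂ i :=
  sinr_domination_implies_power_domination_general n s hs c hc N hN p₁ p₂ hp₁ hp₂ hz
end

section
/- Let n ≥ 1 and consider an interference network with signal gains s : Fin n → ℝ satisfying s(i) > 0, nonnegative interference coefficients c : Fin n → Fin n → ℝ with c(i,j) ≥ 0 and c(i,i) = 0, and noise power N > 0; for nonnegative p : Fin n → ℝ define z(p)(i) = 1 + s(i)·p(i) / (Σ_j c(i,j)·p(j) + N). Let the feasible power set be P = { p : Fin n → ℝ | p(i) ≥ 0 for all i, and Σ_i A(m,i)·p(i) ≤ b(m) for all m }, where A : Fin M → Fin n → ℝ is a matrix with A(m,i) ≥ 0 and b : Fin M → ℝ (this covers per-sub-carrier and per-base-station power constraints). Then the set of achievable SINR vectors Z = { z(p) : p ∈ P } is downward closed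 within the image of the SINR map: if p₁ ∈ P and p₂ is any nonnegative power vector with z(p₂)(i) ≤ z(p₁)(i) for all i, then p₂ ∈ P, and hence z(p₂) ∈ Z. -/
/-- The SINR map of an interference network. -/
noncomputable def sinrVec {n : ℕ} (s : Fin n → ℝ) (c : Fin n → Fin n → ℝ) (N : ℝ)
    (p : Fin n → ℝ) : Fin n → ℝ :=
  fun i => 1 + s i * p i / ((∑ j, c i j * p j) + N)

/-- The achievable SINR region is downward closed within the image of the SINR map:
if `p₁` is feasible and a nonnegative `p₂` has `z(p₂) ≤ z(p₁)` componentwise,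
then `p₂` is feasible and hence `z(p₂)` lies in the achievable SINR set. -/
theorem sinr_region_normal
    (n : ℕ) (hn : 1 ≤ n)
    (s : Fin n → ℝ) (hs : ∀ i, 0 < s i)
    (c : Fin n → Fin n → ℝ) (hc : ∀ i j, 0 ≤ c i j) (hcd : ∀ i, c i i = 0)
    (N : ℝ) (hN : 0 < N)
    (M : ℕ) (A : Fin M → Fin n → ℝ) (hA : ∀ m i, 0 ≤ A m i) (b : Fin M → ℝ)
    (P : Set (Fin n → ℝ))
    (hP : P = {p : Fin n → ℝ | (∀ i, 0 ≤ p i) ∧ ∀ m, (∑ i, A m i * p i) ≤ b m})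
    (Z : Set (Fin n → ℝ))
    (hZ : Z = {v : Fin n → ℝ | ∃ p ∈ P, v = sinrVec s c N p})
    (p₁ : Fin n → ℝ) (hp₁ : p₁ ∈ P)
    (p₂ : Fin n → ℝ) (hp₂ : ∀ i, 0 ≤ p₂ i)
    (hdom : ∀ i, sinrVec s c N p₂ i ≤ sinrVec s c N p₁ i) :
    p₂ ∈ P ∧ sinrVec s c N p₂ ∈ Z := by
  subst hP hZ
  obtain ⟨hp₁n, hp₁b⟩ := hp₁
  -- denominators are positive
  have hD : ∀ (p : Fin n → ℝ), (∀ i, 0 ≤ p i) → ∀ i, 0 < (∑ j, c i j * p j) + N := by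
    intro p hp i
    have : 0 ≤ ∑ j, c i j * p j :=
      Finset.sum_nonneg fun j _ => mul_nonneg (hc i j) (hp j)
    linarith
  have hD₁ := hD p₁ hp₁n
  have hD₂ := hD p₂ hp₂
  -- if p₁ i = 0 then p₂ i = 0
  have hzero : ∀ i, p₁ i = 0 → p₂ i = 0 := by
    intro i h1
    have hd := hdom i
    simp only [sinrVec, h1, mul_zero, zero_div, add_zero] at hd
    have h2 : s i * p₂ i / ((∑ j, c i j * p₂ j) + N) ≤ 0 := by linarith
    have h3 : 0 ≤ s i * p₂ i / ((∑ j, c i j * p₂ j) + N) :=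
      div_nonneg (mul_nonneg (hs i).le (hp₂ i)) (hD₂ i).le
    have h4 : s i * p₂ i / ((∑ j, c i j * p₂ j) + N) = 0 := le_antisymm h2 h3
    have h5 : s i * p₂ i = 0 := by
      have := (div_eq_zero_iff.mp h4)
      rcases this with h | h
      · exact h
      · exact absurd h (hD₂ i).ne'
    rcases mul_eq_zero.mp h5 with h | h
    · exact absurd h (hs i).ne'
    · exact h
  -- main claim : p₂ ≤ p₁ componentwise
  have hle : ∀ i, p₂ i ≤ p₁ i := by
    by_contra hcon
    push_neg at hcon
    obtain ⟨k, hk⟩ := hcon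
    -- the ratio function (division by zero is zero in Lean)
    set f : Fin n → ℝ := fun i => p₂ i / p₁ i with hf
    obtain ⟨i₀, -, hmax⟩ := Finset.exists_max_image Finset.univ f ⟨k, Finset.mem_univ k⟩
    set t := f i₀ with ht
    have hp₁k : 0 < p₁ k := by
      rcases lt_or_eq_of_le (hp₁n k) with h | h
      · exact h
      · exfalso; have := hzero k h.symm; linarith
    have hfk : 1 < f k := by
      rw [hf]
      rw [lt_div_iff₀ hp₁k]
      linarith
    have ht1 : 1 < t := lt_of_lt_of_le hfk (hmax k (Finset.mem_univ k))
    have hp₁i₀ : 0 < p₁ i₀ := by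
      rcases lt_or_eq_of_le (hp₁n i₀) with h | h
      · exact h
      · exfalso
        have : t = 0 := by rw [ht, hf]; simp [← h]
        linarith
    have hti₀ : p₂ i₀ = t * p₁ i₀ := by
      rw [ht, hf]
      field_simp
    have hbound : ∀ j, p₂ j ≤ t * p₁ j := by
      intro j
      rcases lt_or_eq_of_le (hp₁n j) with h | h
      · have := hmax j (Finset.mem_univ j)
        rw [hf] at this
        calc p₂ j = p₂ j / p₁ j * p₁ j := by field_simp
          _ ≤ t * p₁ j := by
            apply mul_le_mul_of_nonneg_right this h.le
      · rw [hzero j h.symm, ← h, mul_zero]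
    -- denominator comparison at i₀
    have hdenom : (∑ j, c i₀ j * p₂ j) + N < t * ((∑ j, c i₀ j * p₁ j) + N) := by
      have hs1 : (∑ j, c i₀ j * p₂ j) ≤ ∑ j, c i₀ j * (t * p₁ j) := by
        apply Finset.sum_le_sum
        intro j _
        exact mul_le_mul_of_nonneg_left (hbound j) (hc i₀ j)
      have hs2 : (∑ j, c i₀ j * (t * p₁ j)) = t * ∑ j, c i₀ j * p₁ j := by
        rw [Finset.mul_sum]; congr 1; ext j; ring
      have hNt : N < t * N := by nlinarith
      calc (∑ j, c i₀ j * p₂ j) + N ≤ t * (∑ j, c i₀ j * p₁ j) + N := by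
            rw [← hs2]; linarith
        _ < t * ((∑ j, c i₀ j * p₁ j) + N) := by rw [mul_add]; linarith
    -- contradiction with hdom i₀
    have hd := hdom i₀
    simp only [sinrVec] at hd
    have hnum : 0 < s i₀ * p₂ i₀ := by
      have h0 : 0 < p₂ i₀ := by rw [hti₀]; nlinarith
      exact mul_pos (hs i₀) h0
    have hkey : s i₀ * p₁ i₀ / ((∑ j, c i₀ j * p₁ j) + N)
        < s i₀ * p₂ i₀ / ((∑ j, c i₀ j * p₂ j) + N) := by
      have h1 : s i₀ * p₂ i₀ / ((∑ j, c i₀ j * p₂ j) + N)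
          > s i₀ * p₂ i₀ / (t * ((∑ j, c i₀ j * p₁ j) + N)) :=
        div_lt_div_of_pos_left hnum (hD₂ i₀) hdenom
      have h2 : s i₀ * p₂ i₀ / (t * ((∑ j, c i₀ j * p₁ j) + N))
          = s i₀ * p₁ i₀ / ((∑ j, c i₀ j * p₁ j) + N) := by
        rw [hti₀, show s i₀ * (t * p₁ i₀) = t * (s i₀ * p₁ i₀) by ring,
          mul_div_mul_left _ _ (ne_of_gt (by linarith : (0:ℝ) < t))]
      linarith
    linarith
  -- conclude
  have hmem : (∀ i, 0 ≤ p₂ i) ∧ ∀ m, (∑ i, A m i * p₂ i) ≤ b m := by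
    refine ⟨hp₂, fun m => ?_⟩
    calc (∑ i, A m i * p₂ i) ≤ ∑ i, A m i * p₁ i :=
          Finset.sum_le_sum fun i _ => mul_le_mul_of_nonneg_left (hle i) (hA m i)
      _ ≤ b m := hp₁b m
  exact ⟨hmem, ⟨p₂, hmem, rfl⟩⟩
end

section
/- Consider a single cell and a single sub-carrier with M ≥ 1 users indexed 1, …, M in decreasing order of link gain: g₁ ≥ g₂ ≥ … ≥ g_M > 0, so user 1 is the strongest and is decoded last while user M is decoded first. Let I_i ≥ 0 be the inter-cell interference power received by user i, let N > 0 be the noise power, and suppose the SIC feasibility conditions g_i·I_{i+1} − g_{i+1}·I_i + (g_i − g_{i+1})·N ≥ 0 hold for all i = 1, …, M−1. Let p₁, …, p_M ≥ 0 be the powers allocated to the users with total P = Σ_{i=1}^M p_i. Under the standard NOMA decoding order, the sum rate is R(p) = Σ_{i=1}^M log(1 + g_i·p_i / (g_i·Σ_{j<i} p_j + I_i + N)). Then R(p) ≤ log(1 + g₁·P / (I₁ + N)); that is, the sum rate is maximized by allocating the entire power P to the user with the highest link gain (and the bound is attained at p₁ = P, p₂ = … = p_M = 0). -/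
/-! With `Cᵢ = Iᵢ + N`, user `i`'s SINR is `pᵢ / (Sᵢ + Cᵢ/gᵢ)`, where `Sᵢ = p₀ + ⋯ + pᵢ₋₁` is the
power of the stronger users. The SIC conditions say exactly that the noise-to-gain ratio `Cᵢ/gᵢ`
is nondecreasing, so it is at least `C₀/g₀` and every rate is bounded by
`log (1 + pᵢ / (Sᵢ + C₀/g₀)) = log (Sᵢ₊₁ + C₀/g₀) - log (Sᵢ + C₀/g₀)`. These bounds telescope
to `log (1 + P / (C₀/g₀))`, the rate of the strongest user alone. -/

open Finset Real

theorem apply_zero_le_of_le_succ_of_lt {α : Type*} [Preorder α] {f : ℕ → α} {M : ℕ}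
    (hf : ∀ i, i + 1 < M → f i ≤ f (i + 1)) : ∀ i < M, f 0 ≤ f i := by
  intro i hi
  induction i with
  | zero => exact le_rfl
  | succ i ih => exact (ih (by omega)).trans (hf i hi)

theorem noise_div_gain_le_of_sic {g₁ g₂ I₁ I₂ N : ℝ} (hg₁ : 0 < g₁) (hg₂ : 0 < g₂)
    (hsic : g₁ * I₂ - g₂ * I₁ + (g₁ - g₂) * N ≥ 0) :
    (I₁ + N) / g₁ ≤ (I₂ + N) / g₂ := by
  rw [div_le_div_iff₀ hg₁ hg₂]
  linarith

theorem mul_div_mul_add_eq_div_add_div {g p S C : ℝ} (hg : 0 < g) :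
    g * p / (g * S + C) = p / (S + C / g) := by
  rw [← mul_div_mul_left p (S + C / g) hg.ne', mul_add, mul_div_cancel₀ C hg.ne']

theorem log_one_add_div_add_le {p S x y : ℝ} (hp : 0 ≤ p) (hS : 0 ≤ S) (hx : 0 < x)
    (hxy : x ≤ y) : log (1 + p / (S + y)) ≤ log (1 + p / (S + x)) := by
  have hy : 0 < y := hx.trans_le hxy
  apply log_le_log (by positivity)
  gcongr

theorem sum_range_log_one_add_div_sum_range_add {p : ℕ → ℝ} {x : ℝ} (hx : 0 < x) :
    ∀ M : ℕ, (∀ i < M, 0 ≤ p i) →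
      ∑ i ∈ range M, log (1 + p i / (∑ j ∈ range i, p j + x))
        = log (1 + (∑ i ∈ range M, p i) / x)
  | 0, _ => by simp
  | M + 1, hp => by
    have hS : 0 ≤ ∑ i ∈ range M, p i :=
      sum_nonneg fun i hi => hp i (Nat.lt_succ_of_lt (mem_range.mp hi))
    have hpM : 0 ≤ p M := hp M M.lt_succ_self
    rw [sum_range_succ,
      sum_range_log_one_add_div_sum_range_add hx M fun i hi => hp i (Nat.lt_succ_of_lt hi),
      ← log_mul (by positivity) (by positivity), sum_range_succ]
    congr 1
    field_simp
    ring

theorem noma_sumrate_best_user_general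
    (M : ℕ) (hM : 1 ≤ M)
    (g I p : ℕ → ℝ)
    (hg_pos : ∀ i < M, 0 < g i)
    (hI : ∀ i < M, 0 ≤ I i)
    (N : ℝ) (hN : 0 < N)
    (hsic : ∀ i, i + 1 < M →
      g i * I (i + 1) - g (i + 1) * I i + (g i - g (i + 1)) * N ≥ 0)
    (hp : ∀ i < M, 0 ≤ p i) :
    (∑ i ∈ Finset.range M,
        Real.log (1 + g i * p i /
          (g i * (∑ j ∈ Finset.range i, p j) + I i + N)))
      ≤ Real.log (1 + g 0 * (∑ i ∈ Finset.range M, p i) / (I 0 + N)) := by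
  have hg₀ : 0 < g 0 := hg_pos 0 hM
  have hC₀ : 0 < (I 0 + N) / g 0 := div_pos (by linarith [hI 0 hM]) hg₀
  have hratio : ∀ i < M, (I 0 + N) / g 0 ≤ (I i + N) / g i :=
    apply_zero_le_of_le_succ_of_lt fun i hi =>
      noise_div_gain_le_of_sic (hg_pos i (by omega)) (hg_pos (i + 1) hi) (hsic i hi)
  calc ∑ i ∈ range M, log (1 + g i * p i / (g i * ∑ j ∈ range i, p j + I i + N))
      = ∑ i ∈ range M, log (1 + p i / (∑ j ∈ range i, p j + (I i + N) / g i)) := by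
        refine sum_congr rfl fun i hi => ?_
        rw [add_assoc, mul_div_mul_add_eq_div_add_div (hg_pos i (mem_range.mp hi))]
    _ ≤ ∑ i ∈ range M, log (1 + p i / (∑ j ∈ range i, p j + (I 0 + N) / g 0)) := by
        refine sum_le_sum fun i hi => ?_
        have hi : i < M := mem_range.mp hi
        exact log_one_add_div_add_le (hp i hi)
          (sum_nonneg fun j hj => hp j ((mem_range.mp hj).trans hi)) hC₀ (hratio i hi)
    _ = log (1 + (∑ i ∈ range M, p i) / ((I 0 + N) / g 0)) :=
        sum_range_log_one_add_div_sum_range_add hC₀ M hp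
    _ = log (1 + g 0 * (∑ i ∈ range M, p i) / (I 0 + N)) := by
        rw [div_div_eq_mul_div, mul_comm]

/-- Single-cell single-sub-carrier NOMA sum rate (users indexed `0, …, M-1`, user `0`
strongest) is maximized by allocating all power to the strongest user:
the sum rate is at most `log (1 + g₀ P / (I₀ + N))` where `P` is the total power. -/
theorem noma_sumrate_best_user
    (M : ℕ) (hM : 1 ≤ M)
    (g I p : ℕ → ℝ)
    (hg_pos : ∀ i < M, 0 < g i)
    (hg_dec : ∀ i j, i ≤ j → j < M → g j ≤ g i)
    (hI : ∀ i < M, 0 ≤ I i)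
    (N : ℝ) (hN : 0 < N)
    (hsic : ∀ i, i + 1 < M →
      g i * I (i + 1) - g (i + 1) * I i + (g i - g (i + 1)) * N ≥ 0)
    (hp : ∀ i < M, 0 ≤ p i) :
    (∑ i ∈ Finset.range M,
        Real.log (1 + g i * p i /
          (g i * (∑ j ∈ Finset.range i, p j) + I i + N)))
      ≤ Real.log (1 + g 0 * (∑ i ∈ Finset.range M, p i) / (I 0 + N)) :=
  noma_sumrate_best_user_general M hM g I p hg_pos hI N hN hsic hp
end

section
/- Let M ≥ 1, let g₁, …, g_M > 0, let I₁, …, I_M ≥ 0, let N > 0, and let p₁, …, p_M ≥ 0. Write S_i = Σ_{j<i} p_j for the partial sums (so S₁ = 0) and T = Σ_{j=1}^M p_j. Then the following telescoping identity holds: Σ_{i=1}^M log(1 + g_i·p_i / (g_i·S_i + I_i + N)) = Σ_{i=1}^{M−1} log( (g_i·S_{i+1} + I_i + N) / (g_{i+1}·S_{i+1} + I_{i+1} + N) ) + log(g_M·T + I_M + N) − log(I₁ + N). -/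
/-! With `P i k = g i · (p 0 + ⋯ + p (k-1)) + I i + N`, the power user `i` receives while users
`j < k` transmit, the `i`-th rate is `log (1 + g i p i / P i i) = log P i (i+1) - log P i i`.
Summing over `i` and regrouping `log P i (i+1)` with the next user's `- log P (i+1) (i+1)` leaves
the ratios `P i (i+1) / P (i+1) (i+1)` and the boundary terms `log P (M-1) M` and `log P 0 0`. -/

open Finset Real

theorem Finset.sum_range_succ_sub_eq_sum_sub_shift {G : Type*} [AddCommGroup G]
    (f h : ℕ → G) (n : ℕ) :
    ∑ i ∈ range (n + 1), (f i - h i) = ∑ i ∈ range n, (f i - h (i + 1)) + f n - h 0 := by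
  rw [sum_sub_distrib, sum_sub_distrib, sum_range_succ f, sum_range_succ' h]
  abel

theorem Real.log_one_add_div {a b : ℝ} (hb : b ≠ 0) (hba : b + a ≠ 0) :
    log (1 + a / b) = log (b + a) - log b := by
  rw [← log_div hba hb, add_div, div_self hb]

def nomaPower (g I p : ℕ → ℝ) (N : ℝ) (i k : ℕ) : ℝ :=
  g i * (∑ j ∈ range k, p j) + I i + N

section

variable {g I p : ℕ → ℝ} {N : ℝ}

theorem nomaPower_pos {M i k : ℕ} (hg : ∀ i < M, 0 < g i) (hI : ∀ i < M, 0 ≤ I i) (hN : 0 < N)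
    (hp : ∀ i < M, 0 ≤ p i) (hi : i < M) (hk : k ≤ M) : 0 < nomaPower g I p N i k := by
  have hS : 0 ≤ ∑ j ∈ range k, p j :=
    sum_nonneg fun j hj => hp j ((mem_range.mp hj).trans_le hk)
  have := mul_nonneg (hg i hi).le hS
  have := hI i hi
  unfold nomaPower
  linarith

theorem nomaPower_succ (i k : ℕ) :
    nomaPower g I p N i (k + 1) = nomaPower g I p N i k + g i * p k := by
  simp only [nomaPower, sum_range_succ]
  ring

theorem log_one_add_sinr {i : ℕ} (h₀ : nomaPower g I p N i i ≠ 0)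
    (h₁ : nomaPower g I p N i (i + 1) ≠ 0) :
    log (1 + g i * p i / nomaPower g I p N i i)
      = log (nomaPower g I p N i (i + 1)) - log (nomaPower g I p N i i) := by
  rw [nomaPower_succ] at h₁ ⊢
  exact log_one_add_div h₀ h₁

end

theorem noma_sumrate_telescoping_general
    (M : ℕ)
    (g I p : ℕ → ℝ)
    (hg : ∀ i < M, 0 < g i)
    (hI : ∀ i < M, 0 ≤ I i)
    (N : ℝ) (hN : 0 < N)
    (hp : ∀ i < M, 0 ≤ p i) :
    (∑ i ∈ Finset.range M,
        Real.log (1 + g i * p i /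
          (g i * (∑ j ∈ Finset.range i, p j) + I i + N)))
      = (∑ i ∈ Finset.range (M - 1),
          Real.log ((g i * (∑ j ∈ Finset.range (i + 1), p j) + I i + N)
            / (g (i + 1) * (∑ j ∈ Finset.range (i + 1), p j) + I (i + 1) + N)))
        + Real.log (g (M - 1) * (∑ j ∈ Finset.range M, p j) + I (M - 1) + N)
        - Real.log (I 0 + N) := by
  cases M with
  | zero => simp
  | succ n =>
    have hP {i k : ℕ} (hi : i < n + 1) (hk : k ≤ n + 1) : nomaPower g I p N i k ≠ 0 :=
      (nomaPower_pos hg hI hN hp hi hk).ne'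
    simp only [Nat.add_sub_cancel]
    calc ∑ i ∈ range (n + 1), log (1 + g i * p i / nomaPower g I p N i i)
        = ∑ i ∈ range (n + 1),
            (log (nomaPower g I p N i (i + 1)) - log (nomaPower g I p N i i)) :=
          sum_congr rfl fun i hi => by
            rw [mem_range] at hi
            exact log_one_add_sinr (hP hi hi.le) (hP hi hi)
      _ = ∑ i ∈ range n,
            (log (nomaPower g I p N i (i + 1)) - log (nomaPower g I p N (i + 1) (i + 1)))
            + log (nomaPower g I p N n (n + 1)) - log (nomaPower g I p N 0 0) :=
          sum_range_succ_sub_eq_sum_sub_shift _ _ n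
      _ = _ := by
        simp only [nomaPower, range_zero, sum_empty, mul_zero, zero_add]
        congr 2
        refine sum_congr rfl fun i hi => ?_
        rw [mem_range] at hi
        exact (log_div (hP (by omega) (by omega)) (hP (by omega) (by omega))).symm

/-- Telescoping identity for the single-cell NOMA sum rate (users indexed
`0, …, M-1`): with partial sums `S i = ∑_{j<i} p j` and total `T = ∑_{j<M} p j`,
the sum rate equals a telescoped sum plus boundary terms. -/
theorem noma_sumrate_telescoping
    (M : ℕ) (hM : 1 ≤ M)
    (g I p : ℕ → ℝ)
    (hg : ∀ i < M, 0 < g i)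
    (hI : ∀ i < M, 0 ≤ I i)
    (N : ℝ) (hN : 0 < N)
    (hp : ∀ i < M, 0 ≤ p i) :
    (∑ i ∈ Finset.range M,
        Real.log (1 + g i * p i /
          (g i * (∑ j ∈ Finset.range i, p j) + I i + N)))
      = (∑ i ∈ Finset.range (M - 1),
          Real.log ((g i * (∑ j ∈ Finset.range (i + 1), p j) + I i + N)
            / (g (i + 1) * (∑ j ∈ Finset.range (i + 1), p j) + I (i + 1) + N)))
        + Real.log (g (M - 1) * (∑ j ∈ Finset.range M, p j) + I (M - 1) + N)
        - Real.log (I 0 + N) :=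
  noma_sumrate_telescoping_general M g I p hg hI N hN hp
end
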